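/- arXiv:math/9910104 — 2 statements merged into one kernel-verified Lean document; each statement's English description precedes it below -/
import Mathlib

section
/- The map sending z ∈ 𝓗 \ {i} to the G¹-orbit of the pair (i, z) is a homeomorphism from 𝓗 \ {i} onto the quotient space C_{2,0} = Conf_{2,0}/G¹ equipped with the quotient topology. In particular, every point of C_{2,0} has a unique representative of the form (i, z) with z ∈ 𝓗, z ≠ i. -/
/-- The configuration space `Conf_{2,0}` of two distinct points of the open upper
half-plane `𝓗`. -/
def Conf20 : Type :=
  {p : ℂ × ℂ // 0 < p.1.im ∧ 0 < p.2.im ∧ p.1 ≠ p.2}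

instance : TopologicalSpace Conf20 :=
  inferInstanceAs (TopologicalSpace {p : ℂ × ℂ // 0 < p.1.im ∧ 0 < p.2.im ∧ p.1 ≠ p.2})

/-- The orbit relation of the group `G¹ = {z ↦ az + b : a > 0, b ∈ ℝ}` acting
diagonally on `Conf_{2,0}`. -/
def G1Rel20 (x y : Conf20) : Prop :=
  ∃ a b : ℝ, 0 < a ∧
    y.val = ((a : ℂ) * x.val.1 + (b : ℂ), (a : ℂ) * x.val.2 + (b : ℂ))

/-- The quotient `C_{2,0} = Conf_{2,0}/G¹` with the quotient topology. -/
def C20 : Type := Quot G1Rel20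

instance : TopologicalSpace C20 :=
  inferInstanceAs (TopologicalSpace (Quot G1Rel20))

/-- For `z ∈ 𝓗 \ {i}`, the configuration `(i, z) ∈ Conf_{2,0}`. -/
def conf20OfPoint (z : {z : ℂ // 0 < z.im ∧ z ≠ Complex.I}) : Conf20 :=
  ⟨(Complex.I, (z : ℂ)), by simp [Complex.I_im], z.2.1, fun h => z.2.2 h.symm⟩

/-!
Every configuration `(p, q)` is carried to one of the form `(i, z)` by the unique element
`w ↦ (w - Re p) / Im p` of `G¹` sending `p` to `i`, so `z = (q - Re p) / Im p`.  This
normalization is continuous and constant on `G¹`-orbits, hence descends to a continuous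
inverse of `z ↦ [(i, z)]` on the quotient.
-/

def Homeomorph.quotOfSection {X Y : Type*} [TopologicalSpace X] [TopologicalSpace Y]
    {r : X → X → Prop} (s : Y → X) (f : X → Y) (hs : Continuous s) (hf : Continuous f)
    (hf_rel : ∀ x y, r x y → f x = f y) (hfs : ∀ y, f (s y) = y)
    (hsf : ∀ x, Quot.mk r (s (f x)) = Quot.mk r x) : Y ≃ₜ Quot r where
  toFun y := Quot.mk r (s y)
  invFun := Quot.lift f hf_rel
  left_inv := hfs
  right_inv := Quot.ind hsf
  continuous_toFun := continuous_quot_mk.comp hs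
  continuous_invFun := continuous_quot_lift _ hf

namespace Conf20

noncomputable section

def normalize (x : Conf20) : ℂ := (x.val.2 - x.val.1.re) / x.val.1.im

lemma ofReal_im_fst_ne_zero (x : Conf20) : ((x.val.1.im : ℝ) : ℂ) ≠ 0 :=
  Complex.ofReal_ne_zero.mpr x.2.1.ne'

lemma normalize_im_pos (x : Conf20) : 0 < (normalize x).im := by
  simpa [normalize] using div_pos x.2.2.1 x.2.1

lemma normalize_ne_I (x : Conf20) : normalize x ≠ Complex.I := by
  intro h
  have hq : x.val.2 = x.val.1.re + x.val.1.im * Complex.I := by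
    rw [normalize, div_eq_iff (ofReal_im_fst_ne_zero x)] at h
    linear_combination h
  exact x.2.2.2 (hq.trans (Complex.re_add_im _)).symm

def normalizeSubtype (x : Conf20) : {z : ℂ // 0 < z.im ∧ z ≠ Complex.I} :=
  ⟨normalize x, normalize_im_pos x, normalize_ne_I x⟩

lemma continuous_normalizeSubtype : Continuous normalizeSubtype := by
  refine Continuous.subtype_mk (Continuous.div ?_ ?_ ofReal_im_fst_ne_zero) _
  all_goals unfold Conf20 at *; fun_prop

lemma normalize_eq_of_G1Rel20 {x y : Conf20} (h : G1Rel20 x y) : normalize x = normalize y := by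
  obtain ⟨a, b, ha, hy⟩ := h
  have ha' : (a : ℂ) ≠ 0 := Complex.ofReal_ne_zero.mpr ha.ne'
  have hx := ofReal_im_fst_ne_zero x
  simp only [normalize, hy, Complex.add_re, Complex.add_im, Complex.re_ofReal_mul,
    Complex.im_ofReal_mul, Complex.ofReal_re, Complex.ofReal_im, add_zero]
  field_simp
  push_cast
  ring

lemma normalizeSubtype_conf20OfPoint (z : {z : ℂ // 0 < z.im ∧ z ≠ Complex.I}) :
    normalizeSubtype (conf20OfPoint z) = z :=
  Subtype.ext (by simp [normalizeSubtype, normalize, conf20OfPoint])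

lemma G1Rel20_conf20OfPoint_normalizeSubtype (x : Conf20) :
    G1Rel20 (conf20OfPoint (normalizeSubtype x)) x := by
  refine ⟨x.val.1.im, x.val.1.re, x.2.1, Prod.ext ?_ ?_⟩
  · simp only [conf20OfPoint]
    linear_combination -(Complex.re_add_im x.val.1)
  · have hx := ofReal_im_fst_ne_zero x
    simp only [conf20OfPoint, normalizeSubtype, normalize]
    field_simp
    ring

lemma continuous_conf20OfPoint : Continuous conf20OfPoint :=
  (continuous_const.prodMk continuous_subtype_val).subtype_mk _

def homeomorphC20 : {z : ℂ // 0 < z.im ∧ z ≠ Complex.I} ≃ₜ C20 :=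
  Homeomorph.quotOfSection conf20OfPoint normalizeSubtype continuous_conf20OfPoint
    continuous_normalizeSubtype (fun _ _ hxy => Subtype.ext (normalize_eq_of_G1Rel20 hxy))
    normalizeSubtype_conf20OfPoint
    (fun x => Quot.sound (G1Rel20_conf20OfPoint_normalizeSubtype x))

end

end Conf20

/-- The map `z ↦ [(i, z)]` is a homeomorphism from `𝓗 \ {i}` onto
`C_{2,0} = Conf_{2,0}/G¹` with the quotient topology; in particular, every point of
`C_{2,0}` has a unique representative of the form `(i, z)` with `z ∈ 𝓗`, `z ≠ i`. -/
theorem C20_homeomorph_upperHalfPlane_sdiff_I :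
    ∃ h : {z : ℂ // 0 < z.im ∧ z ≠ Complex.I} ≃ₜ C20,
      (∀ z, h z = Quot.mk G1Rel20 (conf20OfPoint z)) ∧
      ∀ c : C20, ∃! z : {z : ℂ // 0 < z.im ∧ z ≠ Complex.I},
        c = Quot.mk G1Rel20 (conf20OfPoint z) := by
  refine ⟨Conf20.homeomorphC20, fun _ => rfl, fun c => ?_⟩
  obtain ⟨z, hz, huniq⟩ := Conf20.homeomorphC20.bijective.existsUnique c
  exact ⟨z, hz.symm, fun w hw => huniq w hw.symm⟩
end

section
/- The map sending a complex number z with |z| = 1 to the G²-orbit of the pair (0, z) is a homeomorphism from the unit circle {z ∈ ℂ : |z| = 1} onto the quotient space C_2 = Conf_2/G² equipped with the quotient topology. -/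
/-- The configuration space `Conf_2` of two distinct points of `ℂ`. -/
def Conf2 : Type := {p : ℂ × ℂ // p.1 ≠ p.2}

instance : TopologicalSpace Conf2 :=
  inferInstanceAs (TopologicalSpace {p : ℂ × ℂ // p.1 ≠ p.2})

/-- The orbit relation of the group `G² = {z ↦ az + b : a > 0, b ∈ ℂ}` acting
diagonally on `Conf_2`. -/
def G2Rel2 (x y : Conf2) : Prop :=
  ∃ (a : ℝ) (b : ℂ), 0 < a ∧ y.val = ((a : ℂ) * x.val.1 + b, (a : ℂ) * x.val.2 + b)

/-- The quotient `C_2 = Conf_2/G²` with the quotient topology. -/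
def C2 : Type := Quot G2Rel2

instance : TopologicalSpace C2 := inferInstanceAs (TopologicalSpace (Quot G2Rel2))

/-- For `z` on the unit circle, the configuration `(0, z) ∈ Conf_2`. -/
def conf2OfCircle (z : {z : ℂ // ‖z‖ = 1}) : Conf2 :=
  ⟨((0 : ℂ), (z : ℂ)), fun h => by
    have h0 : (z : ℂ) = 0 := h.symm
    simpa [h0] using z.2⟩

/-!
A configuration `(p₁, p₂)` is moved by `z ↦ az + b` to one with difference `a (p₂ - p₁)`, so the
direction `(p₂ - p₁) / |p₂ - p₁|` is an invariant of the orbit; conversely translating by `p₁` and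
scaling by `|p₂ - p₁|` carries `(0, direction)` to `(p₁, p₂)`. The direction is continuous on
`Conf_2`, hence descends to a continuous inverse of `z ↦ [(0, z)]` on the quotient.
-/

namespace Complex

noncomputable def direction (z : ℂ) : ℂ := z / (‖z‖ : ℂ)

theorem norm_direction {z : ℂ} (hz : z ≠ 0) : ‖direction z‖ = 1 := by
  rw [direction, norm_div, norm_real, norm_norm, div_self (norm_ne_zero_iff.mpr hz)]

theorem direction_ofReal_mul {a : ℝ} (ha : 0 < a) (z : ℂ) :
    direction (a * z) = direction z := by
  have ha' : (a : ℂ) ≠ 0 := ofReal_ne_zero.mpr ha.ne'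
  rw [direction, direction, norm_mul, norm_real, Real.norm_of_nonneg ha.le, ofReal_mul,
    mul_div_mul_left _ _ ha']

theorem direction_of_norm_eq_one {z : ℂ} (hz : ‖z‖ = 1) : direction z = z := by
  simp [direction, hz]

theorem norm_mul_direction (z : ℂ) : (‖z‖ : ℂ) * direction z = z := by
  rcases eq_or_ne z 0 with rfl | hz
  · simp
  · exact mul_div_cancel₀ z (ofReal_ne_zero.mpr (norm_ne_zero_iff.mpr hz))

theorem continuousOn_direction : ContinuousOn direction {0}ᶜ :=
  continuousOn_id.div (continuous_ofReal.comp continuous_norm).continuousOn fun _ hz =>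
    ofReal_ne_zero.mpr (norm_ne_zero_iff.mpr hz)

end Complex

namespace Conf2

def diff (p : Conf2) : ℂ := p.val.2 - p.val.1

theorem diff_ne_zero (p : Conf2) : p.diff ≠ 0 := sub_ne_zero.mpr (Ne.symm p.2)

theorem continuous_diff : Continuous diff :=
  (continuous_snd.comp continuous_subtype_val).sub (continuous_fst.comp continuous_subtype_val)

noncomputable def direction (p : Conf2) : {z : ℂ // ‖z‖ = 1} :=
  ⟨Complex.direction p.diff, Complex.norm_direction p.diff_ne_zero⟩

theorem continuous_direction : Continuous direction :=
  (Complex.continuousOn_direction.comp_continuous continuous_diff diff_ne_zero).subtype_mk _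

theorem direction_eq_of_rel {p q : Conf2} (h : G2Rel2 p q) : p.direction = q.direction := by
  obtain ⟨a, b, ha, hq⟩ := h
  have hdiff : q.diff = a * p.diff := by
    rw [diff, diff, hq]
    ring
  exact Subtype.ext (by simp only [direction, hdiff, Complex.direction_ofReal_mul ha])

theorem continuous_conf2OfCircle : Continuous conf2OfCircle :=
  (continuous_const.prodMk continuous_subtype_val).subtype_mk _

theorem direction_conf2OfCircle (z : {z : ℂ // ‖z‖ = 1}) : (conf2OfCircle z).direction = z :=
  Subtype.ext (by simpa [direction, diff, conf2OfCircle] using Complex.direction_of_norm_eq_one z.2)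

theorem rel_conf2OfCircle_direction (p : Conf2) : G2Rel2 (conf2OfCircle p.direction) p := by
  refine ⟨‖p.diff‖, p.val.1, norm_pos_iff.mpr p.diff_ne_zero, Prod.ext ?_ ?_⟩
  · simp [conf2OfCircle]
  · simp only [conf2OfCircle, direction, Complex.norm_mul_direction, diff]
    ring

end Conf2

/-- The map sending `z` with `|z| = 1` to the `G²`-orbit of `(0, z)` is a
homeomorphism from the unit circle onto `C_2 = Conf_2/G²` with the quotient
topology. -/
theorem C2_homeomorph_circle :
    ∃ h : {z : ℂ // ‖z‖ = 1} ≃ₜ C2,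
      ∀ z, h z = Quot.mk G2Rel2 (conf2OfCircle z) := by
  refine ⟨{ toFun := fun z => Quot.mk G2Rel2 (conf2OfCircle z)
            invFun := Quot.lift Conf2.direction fun _ _ => Conf2.direction_eq_of_rel
            left_inv := Conf2.direction_conf2OfCircle
            right_inv := Quot.ind fun p => Quot.sound (Conf2.rel_conf2OfCircle_direction p)
            continuous_toFun := continuous_quot_mk.comp Conf2.continuous_conf2OfCircle
            continuous_invFun := continuous_quot_lift _ Conf2.continuous_direction }, fun _ => rfl⟩
end
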